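/- If there exists a non-constant natural function f : ℕ+ → ℕ+ all of whose values are prime numbers, then there exists a strictly increasing function ℕ+ → ℕ+ all of whose values are prime numbers; in particular such a function takes arbitrarily large prime values. -/

import Mathlib

/-- Natural functions: smallest set containing identity and constants, closed under
pointwise addition, multiplication and exponentiation. -/
inductive IsNaturalFunction : (ℕ+ → ℕ+) → Prop
  | id : IsNaturalFunction (fun n => n)
  | const (a : ℕ+) : IsNaturalFunction (fun _ => a)
  | add {g h : ℕ+ → ℕ+} : IsNaturalFunction g → IsNaturalFunction h →
      IsNaturalFunction (fun n => g n + h n)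
  | mul {g h : ℕ+ → ℕ+} : IsNaturalFunction g → IsNaturalFunction h →
      IsNaturalFunction (fun n => g n * h n)
  | pow {g h : ℕ+ → ℕ+} : IsNaturalFunction g → IsNaturalFunction h →
      IsNaturalFunction (fun n => g n ^ (h n : ℕ))

lemma natural_const_or_strictMono {f : ℕ+ → ℕ+} (hf : IsNaturalFunction f) :
    (∃ c : ℕ+, ∀ n : ℕ+, f n = c) ∨ StrictMono f := by
  induction hf with
  | id => exact Or.inr fun a b h => h
  | const a => exact Or.inl ⟨a, fun _ => rfl⟩
  | @add g h _ _ ihg ihh =>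
    rcases ihg with ⟨c, hc⟩ | hg'
    · rcases ihh with ⟨d, hd⟩ | hh'
      · exact Or.inl ⟨c + d, fun n => by simp [hc, hd]⟩
      · refine Or.inr fun a b hab => ?_
        simp only [hc]
        exact add_lt_add_right (hh' hab) c
    · rcases ihh with ⟨d, hd⟩ | hh'
      · refine Or.inr fun a b hab => ?_
        simp only [hd]
        exact add_lt_add_left (hg' hab) d
      · exact Or.inr fun a b hab => add_lt_add (hg' hab) (hh' hab)
  | @mul g h _ _ ihg ihh =>
    have key : ∀ a b : ℕ+, g a ≤ g b → h a ≤ h b → (g a < g b ∨ h a < h b) →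
        g a * h a < g b * h b := by
      intro a b h1 h2 h3
      rw [← PNat.coe_lt_coe, PNat.mul_coe, PNat.mul_coe]
      rcases h3 with h3 | h3
      · exact Nat.mul_lt_mul_of_lt_of_le h3 h2 (h b).pos
      · exact Nat.mul_lt_mul_of_le_of_lt h1 h3 (g b).pos
    rcases ihg with ⟨c, hc⟩ | hg'
    · rcases ihh with ⟨d, hd⟩ | hh'
      · exact Or.inl ⟨c * d, fun n => by simp [hc, hd]⟩
      · exact Or.inr fun a b hab => key a b (by rw [hc, hc]) (hh' hab).le
          (Or.inr (hh' hab))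
    · rcases ihh with ⟨d, hd⟩ | hh'
      · exact Or.inr fun a b hab => key a b (hg' hab).le (by rw [hd, hd])
          (Or.inl (hg' hab))
      · exact Or.inr fun a b hab => key a b (hg' hab).le (hh' hab).le
          (Or.inl (hg' hab))
  | @pow g h _ _ ihg ihh =>
    rcases ihg with ⟨c, hc⟩ | hg'
    · rcases ihh with ⟨d, hd⟩ | hh'
      · exact Or.inl ⟨c ^ (d : ℕ), fun n => by simp [hc, hd]⟩
      · rcases eq_or_lt_of_le c.one_le with hc1 | hc1
        · refine Or.inl ⟨1, fun n => by simp [hc, ← hc1]⟩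
        · refine Or.inr fun a b hab => ?_
          rw [← PNat.coe_lt_coe, PNat.pow_coe, PNat.pow_coe, hc, hc]
          exact Nat.pow_lt_pow_right (by exact_mod_cast hc1) (hh' hab)
    · have gstep : ∀ a b : ℕ+, a < b → (h a : ℕ) ≤ (h b : ℕ) →
          (g a : ℕ) ^ (h a : ℕ) < (g b : ℕ) ^ (h b : ℕ) := by
        intro a b hab hle
        calc (g a : ℕ) ^ (h a : ℕ) < (g b : ℕ) ^ (h a : ℕ) :=
              Nat.pow_lt_pow_left (by exact_mod_cast hg' hab) (h a).pos.ne'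
          _ ≤ (g b : ℕ) ^ (h b : ℕ) := Nat.pow_le_pow_right (g b).pos hle
      rcases ihh with ⟨d, hd⟩ | hh'
      · refine Or.inr fun a b hab => ?_
        rw [← PNat.coe_lt_coe, PNat.pow_coe, PNat.pow_coe]
        exact gstep a b hab (by rw [hd, hd])
      · refine Or.inr fun a b hab => ?_
        rw [← PNat.coe_lt_coe, PNat.pow_coe, PNat.pow_coe]
        exact gstep a b hab (by exact_mod_cast (hh' hab).le)

theorem nonconstant_prime_valued_natural_gives_strictMono
    (hex : ∃ f : ℕ+ → ℕ+, IsNaturalFunction f ∧ ¬ (∃ c : ℕ+, ∀ n : ℕ+, f n = c) ∧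
      ∀ n : ℕ+, Nat.Prime (f n : ℕ)) :
    ∃ g : ℕ+ → ℕ+, StrictMono g ∧ (∀ n : ℕ+, Nat.Prime (g n : ℕ)) ∧
      ∀ N : ℕ+, ∃ n : ℕ+, N < g n ∧ Nat.Prime (g n : ℕ) := by
  obtain ⟨f, hf, hnc, hp⟩ := hex
  rcases natural_const_or_strictMono hf with hconst | hmono
  · exact absurd hconst hnc
  · refine ⟨f, hmono, hp, fun N => ⟨N + 1, ?_, hp _⟩⟩
    calc N < N + 1 := PNat.lt_add_right N 1
      _ ≤ f (N + 1) := hmono.le_apply
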